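/- In the modified Laplace matrix model, assume additionally that ‖P_{Ω_X}(Θ − X)‖_F ≤ ρ₀√s for some constant ρ₀ ≥ 0, where s = |Ω_X|, and let γ ∈ (0,1). Then with probability at least 1 − γ, ρ := ‖P_{Ω_Z}(Θ − Z)‖_F ≤ ρ₀√s + (4/ε)·√(s/γ) + √( (2mn/((e^{ε/2}+1)γ)) · (1 + 8/ε²) ). -/

import Mathlib

open MeasureTheory Real

/-- Measurable space structure on `Option α`, via the equivalence with `α ⊕ PUnit`. -/
instance instMeasurableSpaceOption {α : Type u_1} [MeasurableSpace α] :
    MeasurableSpace (Option α) :=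
  MeasurableSpace.comap (Equiv.optionEquivSumPUnit.{0, u_1} α) inferInstance

/-- The Laplace distribution with location `c` and scale `2/ε`,
given by the density `t ↦ (ε/4) * exp (-ε * |t - c| / 2)`. -/
noncomputable def laplaceMeasure (ε c : ℝ) : Measure ℝ :=
  volume.withDensity fun t => ENNReal.ofReal (ε / 4 * Real.exp (-(ε * |t - c|) / 2))

/-- The modified Laplace mechanism on a single rating.  `none` is the missing rating `?`.
A present rating `x` is sent to `x + ξ` with probability `e^{ε/2}/(e^{ε/2}+1)` and to `?`
otherwise; a missing rating is sent to `?` with probability `e^{ε/2}/(e^{ε/2}+1)` and to `ξ`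
otherwise, where `ξ ~ Laplace(0, 2/ε)`. -/
noncomputable def modLaplace (ε : ℝ) (x : Option ℝ) : Measure (Option ℝ) :=
  match x with
  | some r =>
      ENNReal.ofReal (Real.exp (ε / 2) / (Real.exp (ε / 2) + 1)) •
          (laplaceMeasure ε r).map Option.some +
        ENNReal.ofReal (1 / (Real.exp (ε / 2) + 1)) • Measure.dirac (none : Option ℝ)
  | none =>
      ENNReal.ofReal (Real.exp (ε / 2) / (Real.exp (ε / 2) + 1)) •
          Measure.dirac (none : Option ℝ) +
        ENNReal.ofReal (1 / (Real.exp (ε / 2) + 1)) • (laplaceMeasure ε 0).map Option.some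

/-- Distribution of the matrix `Z` obtained by applying the modified Laplace mechanism
independently to every entry of the partially observed rating matrix `X`
(`none` encodes a missing entry). -/
noncomputable def modLaplaceMatrix (ε : ℝ) {m n : ℕ} (X : Fin m × Fin n → Option ℝ) :
    Measure (Fin m × Fin n → Option ℝ) :=
  Measure.pi fun p => modLaplace ε (X p)

/-- Support of the non-missing entries of a partially observed matrix. -/
def suppOf {m n : ℕ} (A : Fin m × Fin n → Option ℝ) : Finset (Fin m × Fin n) :=
  Finset.univ.filter fun p => (A p).isSome


/-! Split `Ω_Z` into `Ω_Z ∩ Ω_X` and `Ω_Z \ Ω_X`. On the first part `Θ − Z = (Θ − X) + (X − Z)`,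
so Minkowski's inequality bounds `ρ` by `‖P_{Ω_X}(Θ − X)‖_F + √A + √B`, where `A` is the squared
Laplace noise on the observed entries that survive and `B` the squared error `(Θ_ij − ξ_ij)²` on
the spurious entries created from missing ones. A Laplace(0, 2/ε) variable has second moment
`8/ε²`, so `E A ≤ 8s/ε²` and `E B ≤ mn (1 + 8/ε²)/(e^{ε/2} + 1)`; Markov's inequality at level
`γ/2` for each of `A`, `B` and a union bound give the claim. -/

open scoped ENNReal

section ExpAbs

variable {a : ℝ}

theorem integral_abs_pow_mul_exp_neg_mul_abs (ha : 0 < a) (k : ℕ) :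
    ∫ x, |x| ^ k * exp (-(a * |x|)) = 2 * k.factorial / a ^ (k + 1) := by
  have h := integral_rpow_mul_exp_neg_mul_Ioi (a := k + 1) (by positivity) ha
  rw [add_sub_cancel_right, Gamma_nat_eq_factorial, ← Nat.cast_add_one, rpow_natCast,
    one_div_pow] at h
  rw [integral_comp_abs (f := fun x => x ^ k * exp (-(a * x))),
    setIntegral_congr_fun measurableSet_Ioi fun x _ => by rw [← rpow_natCast], h]
  field_simp

theorem integrable_pow_mul_exp_neg_mul_abs (ha : 0 < a) (k : ℕ) :
    Integrable fun x : ℝ => x ^ k * exp (-(a * |x|)) := by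
  have h : Integrable fun x : ℝ => |x| ^ k * exp (-(a * |x|)) :=
    .of_integral_ne_zero (by rw [integral_abs_pow_mul_exp_neg_mul_abs ha]; positivity)
  refine h.mono' (by fun_prop) (ae_of_all _ fun x => ?_)
  simp

theorem integral_mul_exp_neg_mul_abs (a : ℝ) : ∫ x, x * exp (-(a * |x|)) = 0 := by
  have h := integral_neg_eq_self (fun x : ℝ => x * exp (-(a * |x|))) volume
  simp only [abs_neg, neg_mul, integral_neg] at h
  linarith

theorem integral_sub_sq_mul_exp_neg_mul_abs (ha : 0 < a) (d : ℝ) :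
    ∫ x, (d - x) ^ 2 * exp (-(a * |x|)) = 2 * d ^ 2 / a + 4 / a ^ 3 := by
  have h0 := integrable_pow_mul_exp_neg_mul_abs ha 0
  have h1 := integrable_pow_mul_exp_neg_mul_abs ha 1
  have h2 := integrable_pow_mul_exp_neg_mul_abs ha 2
  have I0 := integral_abs_pow_mul_exp_neg_mul_abs ha 0
  have I2 := integral_abs_pow_mul_exp_neg_mul_abs ha 2
  simp only [pow_zero, one_mul, pow_one, sq_abs] at h0 h1 h2 I0 I2
  have hexpand : (fun x => (d - x) ^ 2 * exp (-(a * |x|))) = fun x =>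
      d ^ 2 * exp (-(a * |x|)) - 2 * d * (x * exp (-(a * |x|))) + x ^ 2 * exp (-(a * |x|)) := by
    ext x; ring
  have h01 : Integrable fun x => d ^ 2 * exp (-(a * |x|)) - 2 * d * (x * exp (-(a * |x|))) :=
    (h0.const_mul _).sub (h1.const_mul _)
  rw [hexpand, integral_add h01 h2,
    integral_sub (h0.const_mul _) (h1.const_mul _), integral_const_mul, integral_const_mul,
    integral_mul_exp_neg_mul_abs, I0, I2]
  norm_num
  ring

end ExpAbs

section Laplace

variable {ε : ℝ}

theorem lintegral_laplaceMeasure (hε : 0 ≤ ε) (c : ℝ) {g : ℝ → ℝ} (hg0 : ∀ u, 0 ≤ g u)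
    (hg : Integrable fun u => g u * exp (-(ε / 2 * |u|))) :
    ∫⁻ x, ENNReal.ofReal (g (x - c)) ∂laplaceMeasure ε c =
      ENNReal.ofReal (ε / 4 * ∫ u, g u * exp (-(ε / 2 * |u|))) := by
  rw [laplaceMeasure, lintegral_withDensity_eq_lintegral_mul_non_measurable _ (by fun_prop)
    (ae_of_all _ fun _ => ENNReal.ofReal_lt_top)]
  simp_rw [Pi.mul_apply, ← ENNReal.ofReal_mul' (hg0 _)]
  rw [← ofReal_integral_eq_lintegral_ofReal, ← integral_const_mul,
    ← integral_sub_right_eq_self (fun u => ε / 4 * (g u * exp (-(ε / 2 * |u|)))) c]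
  · congr 2 with x
    ring_nf
  · exact ((hg.const_mul (ε / 4)).comp_sub_right c).congr
      (ae_of_all _ fun x => by simp only; ring_nf)
  · exact ae_of_all _ fun x => by have := hg0 (x - c); positivity

theorem isProbabilityMeasure_laplaceMeasure (hε : 0 < ε) (c : ℝ) :
    IsProbabilityMeasure (laplaceMeasure ε c) := by
  have h := lintegral_laplaceMeasure hε.le c (g := fun _ => 1) (fun _ => zero_le_one)
    (by simpa using integrable_pow_mul_exp_neg_mul_abs (half_pos hε) 0)
  have I0 := integral_abs_pow_mul_exp_neg_mul_abs (half_pos hε) 0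
  simp only [pow_zero, one_mul, ENNReal.ofReal_one, lintegral_const] at h I0
  constructor
  rw [h, I0, ← ENNReal.ofReal_one]
  congr 1
  field_simp
  ring

theorem lintegral_sub_sq_laplaceMeasure (hε : 0 < ε) (b c : ℝ) :
    ∫⁻ x, ENNReal.ofReal ((b - x) ^ 2) ∂laplaceMeasure ε c =
      ENNReal.ofReal ((b - c) ^ 2 + 8 / ε ^ 2) := by
  have I := integral_sub_sq_mul_exp_neg_mul_abs (half_pos hε) (b - c)
  have h := lintegral_laplaceMeasure hε.le c (g := fun u => (b - c - u) ^ 2)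
    (fun _ => sq_nonneg _) (.of_integral_ne_zero (by rw [I]; positivity))
  simp only [sub_sub_sub_cancel_right] at h
  rw [h, I]
  congr 1
  field_simp
  ring

end Laplace

section OptionMeasurable

variable {α β : Type*} [MeasurableSpace α] [MeasurableSpace β]

theorem measurable_option_some : Measurable (Option.some : α → Option α) :=
  fun _ ⟨_, ht, h⟩ => h ▸ measurable_inl ht

theorem Measurable.option_elim {b : β} {f : α → β} (hf : Measurable f) :
    Measurable fun o : Option α => o.elim b f := by
  have h : (fun o : Option α => o.elim b f) =
      Sum.elim f (fun _ => b) ∘ Equiv.optionEquivSumPUnit α := by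
    funext o; cases o <;> rfl
  exact h ▸ (hf.sumElim measurable_const).comp (comap_measurable _)

end OptionMeasurable

/-- The entry of `P_{Ω_Z}(b − Z)` at a position where `Z` holds `o`. -/
def maskedSub (b : ℝ) (o : Option ℝ) : ℝ := o.elim 0 (b - ·)

theorem measurable_maskedSub (b : ℝ) : Measurable (maskedSub b) :=
  (measurable_const.sub measurable_id).option_elim

theorem sq_maskedSub_sub_maskedSub_le (b c : ℝ) (o : Option ℝ) :
    (maskedSub b o - maskedSub c o) ^ 2 ≤ (b - c) ^ 2 := by
  cases o with
  | none => simpa [maskedSub] using sq_nonneg (b - c)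
  | some z => exact le_of_eq (by simp only [maskedSub, Option.elim_some]; ring)

section ModLaplace

variable {ε : ℝ}

theorem isProbabilityMeasure_modLaplace (hε : 0 < ε) (x : Option ℝ) :
    IsProbabilityMeasure (modLaplace ε x) := by
  have := isProbabilityMeasure_laplaceMeasure hε
  have hsum : ENNReal.ofReal (exp (ε / 2) / (exp (ε / 2) + 1)) +
      ENNReal.ofReal (1 / (exp (ε / 2) + 1)) = 1 := by
    rw [← ENNReal.ofReal_add (by positivity) (by positivity), ← add_div,
      div_self (by positivity), ENNReal.ofReal_one]
  constructor
  cases x <;>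
    simpa only [modLaplace, Measure.coe_add, Measure.coe_smul, Pi.add_apply, Pi.smul_apply,
      smul_eq_mul, Measure.map_apply measurable_option_some .univ, Set.preimage_univ,
      measure_univ, mul_one] using hsum

theorem lintegral_modLaplace_some {g : Option ℝ → ℝ≥0∞} (hg : Measurable g) (hg0 : g none = 0)
    (r : ℝ) :
    ∫⁻ o, g o ∂modLaplace ε (some r) =
      ENNReal.ofReal (exp (ε / 2) / (exp (ε / 2) + 1)) * ∫⁻ x, g (some x) ∂laplaceMeasure ε r := by
  simp [modLaplace, lintegral_add_measure, lintegral_map hg measurable_option_some,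
    lintegral_dirac' _ hg, hg0]

theorem lintegral_modLaplace_none {g : Option ℝ → ℝ≥0∞} (hg : Measurable g) (hg0 : g none = 0) :
    ∫⁻ o, g o ∂modLaplace ε none =
      ENNReal.ofReal (1 / (exp (ε / 2) + 1)) * ∫⁻ x, g (some x) ∂laplaceMeasure ε 0 := by
  simp [modLaplace, lintegral_add_measure, lintegral_map hg measurable_option_some,
    lintegral_dirac' _ hg, hg0]

theorem lintegral_maskedSub_sq_modLaplace_some (hε : 0 < ε) (b r : ℝ) :
    ∫⁻ o, ENNReal.ofReal (maskedSub b o ^ 2) ∂modLaplace ε (some r) =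
      ENNReal.ofReal (exp (ε / 2) / (exp (ε / 2) + 1) * ((b - r) ^ 2 + 8 / ε ^ 2)) := by
  rw [lintegral_modLaplace_some ((measurable_maskedSub b).pow_const 2).ennreal_ofReal
    (by simp [maskedSub]) r]
  simp only [maskedSub, Option.elim_some]
  rw [lintegral_sub_sq_laplaceMeasure hε, ← ENNReal.ofReal_mul (by positivity)]

theorem lintegral_maskedSub_sq_modLaplace_none (hε : 0 < ε) (b : ℝ) :
    ∫⁻ o, ENNReal.ofReal (maskedSub b o ^ 2) ∂modLaplace ε none =
      ENNReal.ofReal (1 / (exp (ε / 2) + 1) * (b ^ 2 + 8 / ε ^ 2)) := by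
  rw [lintegral_modLaplace_none ((measurable_maskedSub b).pow_const 2).ennreal_ofReal
    (by simp [maskedSub])]
  simp only [maskedSub, Option.elim_some]
  rw [lintegral_sub_sq_laplaceMeasure hε, sub_zero, ← ENNReal.ofReal_mul (by positivity)]

end ModLaplace

theorem lintegral_sum_comp_eval_pi {ι : Type*} [Fintype ι] {α : ι → Type*}
    [∀ i, MeasurableSpace (α i)] (ν : ∀ i, Measure (α i)) [∀ i, IsProbabilityMeasure (ν i)]
    (s : Finset ι) {f : ∀ i, α i → ℝ≥0∞} (hf : ∀ i, Measurable (f i)) :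
    ∫⁻ x, ∑ i ∈ s, f i (x i) ∂Measure.pi ν = ∑ i ∈ s, ∫⁻ y, f i y ∂ν i :=
  calc ∫⁻ x, ∑ i ∈ s, f i (x i) ∂Measure.pi ν = ∑ i ∈ s, ∫⁻ x, f i (x i) ∂Measure.pi ν :=
        lintegral_finsetSum s fun i _ => (hf i).comp (measurable_pi_apply i)
    _ = ∑ i ∈ s, ∫⁻ y, f i y ∂ν i :=
        Finset.sum_congr rfl fun i _ => (measurePreserving_eval ν i).lintegral_comp (hf i)

section Markov

variable {α : Type*} [MeasurableSpace α] {μ : Measure α}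

theorem measure_div_lt_le_of_lintegral_le {f : α → ℝ} (hf : Measurable f) {a δ : ℝ} (ha : 0 ≤ a)
    (hδ : 0 < δ) (h : ∫⁻ x, ENNReal.ofReal (f x) ∂μ ≤ ENNReal.ofReal a) :
    μ {x | a / δ < f x} ≤ ENNReal.ofReal δ := by
  rcases ha.eq_or_lt with rfl | ha
  · have hzero : (fun x => ENNReal.ofReal (f x)) =ᵐ[μ] 0 := by
      rwa [← lintegral_eq_zero_iff hf.ennreal_ofReal, ← nonpos_iff_eq_zero, ← ENNReal.ofReal_zero]
    refine (measure_mono_null (fun x (hx : 0 / δ < f x) => ?_) (ae_iff.mp hzero)).trans_le zero_le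
    simpa [zero_div] using hx
  · calc μ {x | a / δ < f x}
        ≤ μ {x | ENNReal.ofReal (a / δ) ≤ ENNReal.ofReal (f x)} :=
          measure_mono fun x hx => ENNReal.ofReal_le_ofReal (le_of_lt hx)
      _ ≤ (∫⁻ x, ENNReal.ofReal (f x) ∂μ) / ENNReal.ofReal (a / δ) :=
          meas_ge_le_lintegral_div hf.ennreal_ofReal.aemeasurable
            (by simp [ha, hδ]) ENNReal.ofReal_ne_top
      _ ≤ ENNReal.ofReal a / ENNReal.ofReal (a / δ) := by gcongr
      _ = ENNReal.ofReal δ := by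
          rw [← ENNReal.ofReal_div_of_pos (by positivity), div_div_cancel₀ ha.ne']

theorem ofReal_one_sub_le_measure_le_and_le [IsProbabilityMeasure μ] {f g : α → ℝ}
    (hf : Measurable f) (hg : Measurable g) {a b γ : ℝ} (ha : 0 ≤ a) (hb : 0 ≤ b) (hγ : 0 < γ)
    (hfa : ∫⁻ x, ENNReal.ofReal (f x) ∂μ ≤ ENNReal.ofReal a)
    (hgb : ∫⁻ x, ENNReal.ofReal (g x) ∂μ ≤ ENNReal.ofReal b) :
    ENNReal.ofReal (1 - γ) ≤ μ {x | f x ≤ 2 * a / γ ∧ g x ≤ 2 * b / γ} := by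
  set S := {x | f x ≤ 2 * a / γ ∧ g x ≤ 2 * b / γ}
  have hSc : μ Sᶜ ≤ ENNReal.ofReal γ := by
    have hsplit : Sᶜ = {x | a / (γ / 2) < f x} ∪ {x | b / (γ / 2) < g x} := by
      ext x
      simp only [S, Set.mem_compl_iff, Set.mem_ofPred_eq, Set.mem_union, not_and_or, not_le,
        div_div_eq_mul_div, mul_comm]
    calc μ Sᶜ ≤ ENNReal.ofReal (γ / 2) + ENNReal.ofReal (γ / 2) :=
          hsplit ▸ (measure_union_le _ _).trans (add_le_add
            (measure_div_lt_le_of_lintegral_le hf ha (half_pos hγ) hfa)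
            (measure_div_lt_le_of_lintegral_le hg hb (half_pos hγ) hgb))
      _ = ENNReal.ofReal γ := by
          rw [← ENNReal.ofReal_add (by positivity) (by positivity), add_halves]
  calc ENNReal.ofReal (1 - γ) = 1 - ENNReal.ofReal γ := by
        rw [ENNReal.ofReal_sub _ hγ.le, ENNReal.ofReal_one]
    _ ≤ 1 - μ Sᶜ := tsub_le_tsub_left hSc 1
    _ ≤ μ S := by
        rw [tsub_le_iff_right, ← measure_univ (μ := μ), ← Set.union_compl_self S]
        exact measure_union_le _ _

end Markov

theorem sqrt_add_le_sqrt_add_sqrt {x y : ℝ} (hx : 0 ≤ x) (hy : 0 ≤ y) : √(x + y) ≤ √x + √y :=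
  sqrt_le_iff.mpr ⟨by positivity,
    by nlinarith [sq_sqrt hx, sq_sqrt hy, sqrt_nonneg x, sqrt_nonneg y]⟩

theorem sqrt_sum_sq_add_le {ι : Type*} (s : Finset ι) (f g : ι → ℝ) :
    √(∑ i ∈ s, (f i + g i) ^ 2) ≤ √(∑ i ∈ s, f i ^ 2) + √(∑ i ∈ s, g i ^ 2) := by
  simpa [sqrt_eq_rpow, rpow_two, sq_abs] using Lp_add_le s f g one_le_two

theorem sqrt_sum_maskedSub_sq_le {ι : Type*} [Fintype ι] [DecidableEq ι] (s : Finset ι)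
    (θ x : ι → ℝ) (z : ι → Option ℝ) :
    √(∑ i, maskedSub (θ i) (z i) ^ 2) ≤
      √(∑ i ∈ s, (θ i - x i) ^ 2) + √(∑ i ∈ s, maskedSub (x i) (z i) ^ 2) +
        √(∑ i ∈ sᶜ, maskedSub (θ i) (z i) ^ 2) := by
  have hs : √(∑ i ∈ s, maskedSub (θ i) (z i) ^ 2) ≤
      √(∑ i ∈ s, (θ i - x i) ^ 2) + √(∑ i ∈ s, maskedSub (x i) (z i) ^ 2) :=
    calc √(∑ i ∈ s, maskedSub (θ i) (z i) ^ 2)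
        = √(∑ i ∈ s, (maskedSub (θ i) (z i) - maskedSub (x i) (z i) +
            maskedSub (x i) (z i)) ^ 2) := by simp_rw [sub_add_cancel]
      _ ≤ √(∑ i ∈ s, (maskedSub (θ i) (z i) - maskedSub (x i) (z i)) ^ 2) +
            √(∑ i ∈ s, maskedSub (x i) (z i) ^ 2) := sqrt_sum_sq_add_le s _ _
      _ ≤ √(∑ i ∈ s, (θ i - x i) ^ 2) + √(∑ i ∈ s, maskedSub (x i) (z i) ^ 2) :=
          add_le_add_left (sqrt_le_sqrt (Finset.sum_le_sum fun i _ =>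
            sq_maskedSub_sub_maskedSub_le _ _ _)) _
  calc √(∑ i, maskedSub (θ i) (z i) ^ 2)
      = √(∑ i ∈ s, maskedSub (θ i) (z i) ^ 2 + ∑ i ∈ sᶜ, maskedSub (θ i) (z i) ^ 2) := by
        rw [Finset.sum_add_sum_compl]
    _ ≤ √(∑ i ∈ s, maskedSub (θ i) (z i) ^ 2) + √(∑ i ∈ sᶜ, maskedSub (θ i) (z i) ^ 2) :=
        sqrt_add_le_sqrt_add_sqrt (by positivity) (by positivity)
    _ ≤ _ := by gcongr

theorem measurable_sum_maskedSub_sq {ι : Type*} (s : Finset ι) (c : ι → ℝ) :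
    Measurable fun z : ι → Option ℝ => ∑ i ∈ s, maskedSub (c i) (z i) ^ 2 :=
  Finset.measurable_sum _ fun i _ =>
    ((measurable_maskedSub _).comp (measurable_pi_apply i)).pow_const 2

theorem sum_suppOf_sq_sub_getD {m n : ℕ} (θ : Fin m × Fin n → ℝ) (Z : Fin m × Fin n → Option ℝ) :
    ∑ p ∈ suppOf Z, (θ p - (Z p).getD 0) ^ 2 = ∑ p, maskedSub (θ p) (Z p) ^ 2 := by
  rw [suppOf, Finset.sum_filter]
  refine Finset.sum_congr rfl fun p _ => ?_
  cases Z p <;> simp [maskedSub]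

section ModLaplaceMatrix

variable {ε : ℝ} {m n : ℕ}

theorem isProbabilityMeasure_modLaplaceMatrix (hε : 0 < ε) (X : Fin m × Fin n → Option ℝ) :
    IsProbabilityMeasure (modLaplaceMatrix ε X) := by
  have := fun p => isProbabilityMeasure_modLaplace hε (X p)
  unfold modLaplaceMatrix
  infer_instance

theorem lintegral_ofReal_sum_maskedSub_sq_modLaplaceMatrix (hε : 0 < ε)
    (X : Fin m × Fin n → Option ℝ) (s : Finset (Fin m × Fin n)) (c : Fin m × Fin n → ℝ) :
    ∫⁻ Z, ENNReal.ofReal (∑ p ∈ s, maskedSub (c p) (Z p) ^ 2) ∂modLaplaceMatrix ε X =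
      ∑ p ∈ s, ∫⁻ o, ENNReal.ofReal (maskedSub (c p) o ^ 2) ∂modLaplace ε (X p) := by
  have := fun p => isProbabilityMeasure_modLaplace hε (X p)
  simp_rw [ENNReal.ofReal_sum_of_nonneg fun p _ => sq_nonneg (maskedSub (c p) _)]
  exact lintegral_sum_comp_eval_pi _ s fun p =>
    ((measurable_maskedSub (c p)).pow_const 2).ennreal_ofReal

theorem lintegral_sum_maskedSub_sq_suppOf_le (hε : 0 < ε) (X : Fin m × Fin n → Option ℝ) :
    ∫⁻ Z, ENNReal.ofReal (∑ p ∈ suppOf X, maskedSub ((X p).getD 0) (Z p) ^ 2)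
        ∂modLaplaceMatrix ε X ≤
      ENNReal.ofReal ((suppOf X).card * (8 / ε ^ 2)) := by
  rw [lintegral_ofReal_sum_maskedSub_sq_modLaplaceMatrix hε, ← nsmul_eq_mul, ← Finset.sum_const,
    ENNReal.ofReal_sum_of_nonneg fun _ _ => by positivity]
  refine Finset.sum_le_sum fun p hp => ?_
  obtain ⟨r, hr⟩ := Option.isSome_iff_exists.mp (Finset.mem_filter.mp hp).2
  rw [hr, Option.getD_some, lintegral_maskedSub_sq_modLaplace_some hε, sub_self,
    zero_pow two_ne_zero, zero_add]
  exact ENNReal.ofReal_le_ofReal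
    (mul_le_of_le_one_left (by positivity) (div_le_one_of_le₀ (by linarith) (by positivity)))

theorem lintegral_sum_maskedSub_sq_compl_suppOf_le (hε : 0 < ε) (θ : Fin m × Fin n → ℝ)
    (hθ : ∀ p, θ p ∈ Set.Icc (-1 : ℝ) 1) (X : Fin m × Fin n → Option ℝ) :
    ∫⁻ Z, ENNReal.ofReal (∑ p ∈ (suppOf X)ᶜ, maskedSub (θ p) (Z p) ^ 2) ∂modLaplaceMatrix ε X ≤
      ENNReal.ofReal (m * n * (1 / (exp (ε / 2) + 1) * (1 + 8 / ε ^ 2))) := by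
  rw [lintegral_ofReal_sum_maskedSub_sq_modLaplaceMatrix hε]
  calc ∑ p ∈ (suppOf X)ᶜ, ∫⁻ o, ENNReal.ofReal (maskedSub (θ p) o ^ 2) ∂modLaplace ε (X p)
      ≤ ∑ p ∈ (suppOf X)ᶜ, ENNReal.ofReal (1 / (exp (ε / 2) + 1) * (1 + 8 / ε ^ 2)) := by
        refine Finset.sum_le_sum fun p hp => ?_
        have hXp : X p = none := by simpa [suppOf] using hp
        have hθp : θ p ^ 2 ≤ 1 := sq_le_one_iff_abs_le_one _ |>.mpr (abs_le.mpr (hθ p))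
        rw [hXp, lintegral_maskedSub_sq_modLaplace_none hε]
        gcongr
    _ = ENNReal.ofReal ((suppOf X)ᶜ.card * (1 / (exp (ε / 2) + 1) * (1 + 8 / ε ^ 2))) := by
        rw [← ENNReal.ofReal_sum_of_nonneg fun _ _ => by positivity, Finset.sum_const,
          nsmul_eq_mul]
    _ ≤ ENNReal.ofReal (m * n * (1 / (exp (ε / 2) + 1) * (1 + 8 / ε ^ 2))) := by
        gcongr
        exact_mod_cast (Finset.card_le_univ _).trans_eq (by simp)

end ModLaplaceMatrix

theorem modLaplace_observation_error_bound_general (ε : ℝ) (hε : 0 < ε) (m n : ℕ)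
    (Θ : Fin m × Fin n → ℝ) (hΘ : ∀ p, Θ p ∈ Set.Icc (-1 : ℝ) 1)
    (X : Fin m × Fin n → Option ℝ)
    (ρ₀ : ℝ)
    (hclose : Real.sqrt (∑ p ∈ suppOf X, (Θ p - (X p).getD 0) ^ 2) ≤
      ρ₀ * Real.sqrt ((suppOf X).card))
    (γ : ℝ) (hγ : γ ∈ Set.Ioo (0 : ℝ) 1) :
    ENNReal.ofReal (1 - γ) ≤
      modLaplaceMatrix ε X
        {Z | Real.sqrt (∑ p ∈ suppOf Z, (Θ p - (Z p).getD 0) ^ 2) ≤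
          ρ₀ * Real.sqrt ((suppOf X).card) +
            4 / ε * Real.sqrt ((suppOf X).card / γ) +
            Real.sqrt (2 * (m * n : ℝ) / ((Real.exp (ε / 2) + 1) * γ) * (1 + 8 / ε ^ 2))} := by
  have := isProbabilityMeasure_modLaplaceMatrix hε X
  refine (ofReal_one_sub_le_measure_le_and_le (measurable_sum_maskedSub_sq _ _)
    (measurable_sum_maskedSub_sq _ _) (by positivity) (by positivity) hγ.1
    (lintegral_sum_maskedSub_sq_suppOf_le hε X)
    (lintegral_sum_maskedSub_sq_compl_suppOf_le hε Θ hΘ X)).trans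
    (measure_mono fun Z ⟨hA, hB⟩ => ?_)
  rw [Set.mem_ofPred_eq, sum_suppOf_sq_sub_getD]
  refine (sqrt_sum_maskedSub_sq_le (suppOf X) Θ (fun p => (X p).getD 0) Z).trans ?_
  refine add_le_add (add_le_add hclose ?_) ?_
  · calc _ ≤ √(2 * ((suppOf X).card * (8 / ε ^ 2)) / γ) := sqrt_le_sqrt hA
      _ = 4 / ε * √((suppOf X).card / γ) := by
          rw [← sqrt_sq (by positivity : 0 ≤ 4 / ε), ← sqrt_mul (by positivity)]
          congr 1
          field_simp
          ring
  · exact (sqrt_le_sqrt hB).trans_eq (by congr 1; field_simp)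

/-- Modified Laplace matrix model: if `‖P_{Ω_X}(Θ − X)‖_F ≤ ρ₀√s` with `s = |Ω_X|`, then for
any `γ ∈ (0,1)`, with probability at least `1 − γ`,
`‖P_{Ω_Z}(Θ − Z)‖_F ≤ ρ₀√s + (4/ε)√(s/γ) + √((2mn/((e^{ε/2}+1)γ))(1 + 8/ε²))`. -/
theorem modLaplace_observation_error_bound (ε : ℝ) (hε : 0 < ε) (m n : ℕ)
    (Θ : Fin m × Fin n → ℝ) (hΘ : ∀ p, Θ p ∈ Set.Icc (-1 : ℝ) 1)
    (X : Fin m × Fin n → Option ℝ)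
    (hX : ∀ p, ∀ r : ℝ, X p = some r → r ∈ Set.Icc (-1 : ℝ) 1)
    (ρ₀ : ℝ) (hρ₀ : 0 ≤ ρ₀)
    (hclose : Real.sqrt (∑ p ∈ suppOf X, (Θ p - (X p).getD 0) ^ 2) ≤
      ρ₀ * Real.sqrt ((suppOf X).card))
    (γ : ℝ) (hγ : γ ∈ Set.Ioo (0 : ℝ) 1) :
    ENNReal.ofReal (1 - γ) ≤
      modLaplaceMatrix ε X
        {Z | Real.sqrt (∑ p ∈ suppOf Z, (Θ p - (Z p).getD 0) ^ 2) ≤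
          ρ₀ * Real.sqrt ((suppOf X).card) +
            4 / ε * Real.sqrt ((suppOf X).card / γ) +
            Real.sqrt (2 * (m * n : ℝ) / ((Real.exp (ε / 2) + 1) * γ) * (1 + 8 / ε ^ 2))} :=
  modLaplace_observation_error_bound_general ε hε m n Θ hΘ X ρ₀ hclose γ hγ
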